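/- arXiv:math/0604097 — 8 statements merged into one kernel-verified Lean document; each statement's English description precedes it below -/
import Mathlib

section
/- Let a, b, c be integers with a > 0, a not a perfect square, and b^2 - 4ac ≠ 0. If there exists an integer t₀ such that a·t₀^2 + b·t₀ + c is a perfect square (i.e., equals y^2 for some integer y), then there are infinitely many integers t such that a·t^2 + b·t + c is a perfect square. -/
/-- Key polynomial identity: a Pell solution transports one square value of the
quadratic to another. -/
private lemma pell_key (a b c t y x w : ℤ)
    (heq : a * t ^ 2 + b * t + c = y ^ 2)
    (hp : x ^ 2 - 4 * a ^ 3 * w ^ 2 = 1) :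
    a * ((2 * x ^ 2 - 1) * t + 4 * a ^ 2 * b * w ^ 2 + 4 * a * x * w * y) ^ 2
      + b * ((2 * x ^ 2 - 1) * t + 4 * a ^ 2 * b * w ^ 2 + 4 * a * x * w * y) + c
      = ((2 * x ^ 2 - 1) * y + 2 * a * x * w * (2 * a * t + b)) ^ 2 := by
  linear_combination heq +
    (4 * a * t ^ 2 * x ^ 2 - 4 * y ^ 2 * x ^ 2 + 2 * b * t - 8 * a * b * x * y * w
      - 4 * a ^ 2 * b ^ 2 * w ^ 2) * hp

/-- Pell solutions with arbitrarily large second coordinate. -/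
private lemma pell_large (d : ℤ) (hd : 0 < d) (hnds : ¬ IsSquare d) :
    ∀ N : ℤ, ∃ x w : ℤ, 1 ≤ x ∧ 1 ≤ w ∧ N ≤ w ∧ x ^ 2 - d * w ^ 2 = 1 := by
  obtain ⟨x₀, w₀, hp, hw₀⟩ := Pell.exists_of_not_isSquare hd hnds
  have hbase : (|x₀|) ^ 2 - d * (|w₀|) ^ 2 = 1 := by rw [sq_abs, sq_abs]; exact hp
  have hw1 : 1 ≤ |w₀| := Int.one_le_abs (by simpa using hw₀)
  have hx1 : 1 ≤ |x₀| := by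
    nlinarith [abs_nonneg x₀, sq_nonneg (|w₀|)]
  have key : ∀ n : ℕ, ∃ x w : ℤ, 1 ≤ x ∧ 1 ≤ w ∧ (n : ℤ) ≤ w ∧ x ^ 2 - d * w ^ 2 = 1 := by
    intro n
    induction n with
    | zero => exact ⟨|x₀|, |w₀|, hx1, hw1, by push_cast; linarith, hbase⟩
    | succ k ih =>
        obtain ⟨x, w, hx, hw, hkw, hxw⟩ := ih
        refine ⟨x ^ 2 + d * w ^ 2, 2 * x * w, by nlinarith, by nlinarith, ?_, by nlinarith⟩
        push_cast
        nlinarith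
  intro N
  obtain ⟨x, w, hx, hw, hNw, hxw⟩ := key N.toNat
  exact ⟨x, w, hx, hw, le_trans (Int.self_le_toNat N) hNw, hxw⟩

/-- Pell-equation fact: if `a > 0` is not a perfect square, `b² - 4ac ≠ 0`, and the
quadratic `a·t² + b·t + c` is a perfect square for some integer `t₀`, then it is a
perfect square for infinitely many integers `t`. -/
theorem pell_quadratic_infinitely_many_square_values
    (a b c : ℤ) (ha : 0 < a) (hns : ¬ ∃ y : ℤ, a = y ^ 2)
    (hdisc : b ^ 2 - 4 * a * c ≠ 0)
    (h : ∃ t₀ y : ℤ, a * t₀ ^ 2 + b * t₀ + c = y ^ 2) :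
    {t : ℤ | ∃ y : ℤ, a * t ^ 2 + b * t + c = y ^ 2}.Infinite := by
  set S : Set ℤ := {t : ℤ | ∃ y : ℤ, a * t ^ 2 + b * t + c = y ^ 2} with hS
  -- d = 4a³ is positive and not a square
  have hd : (0 : ℤ) < 4 * a ^ 3 := by positivity
  have hnds : ¬ IsSquare (4 * a ^ 3) := by
    rintro ⟨s, hs⟩
    apply hns
    have h2a : (2 * a) ^ 2 ∣ s ^ 2 := ⟨a, by linarith [hs]⟩
    have h2a' : (2 * a) ∣ s := by
      rwa [Int.pow_dvd_pow_iff (by norm_num : 2 ≠ 0)] at h2a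
    obtain ⟨y, hy⟩ := h2a'
    refine ⟨y, ?_⟩
    have : 4 * a ^ 2 * a = 4 * a ^ 2 * y ^ 2 := by
      have := hs; rw [hy] at this; ring_nf; ring_nf at this; linarith
    have h4a : (4 : ℤ) * a ^ 2 ≠ 0 := by positivity
    exact mul_left_cancel₀ h4a this
  -- Step 1: find an element of S with a nonzero y.
  obtain ⟨t₀, y₀, heq₀⟩ := h
  have step1 : ∃ t₁ y₁ : ℤ, a * t₁ ^ 2 + b * t₁ + c = y₁ ^ 2 ∧ y₁ ≠ 0 := by
    by_cases hy₀ : y₀ ≠ 0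
    · exact ⟨t₀, y₀, heq₀, hy₀⟩
    · push_neg at hy₀
      subst hy₀
      have hu : 2 * a * t₀ + b ≠ 0 := by
        intro hu0
        apply hdisc
        have : (2 * a * t₀ + b) ^ 2 - 4 * a * (a * t₀ ^ 2 + b * t₀ + c) = b ^ 2 - 4 * a * c := by
          ring
        rw [hu0, heq₀] at this
        simpa using this.symm
      obtain ⟨x, w, hx, hw, _, hxw⟩ := pell_large (4 * a ^ 3) hd hnds 1
      refine ⟨(2 * x ^ 2 - 1) * t₀ + 4 * a ^ 2 * b * w ^ 2 + 4 * a * x * w * 0,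
        (2 * x ^ 2 - 1) * 0 + 2 * a * x * w * (2 * a * t₀ + b),
        pell_key a b c t₀ 0 x w heq₀ hxw, ?_⟩
      simp only [mul_zero, zero_add]
      exact mul_ne_zero (by positivity) hu
  obtain ⟨t₁, y₁, heq₁, hy₁⟩ := step1
  -- Step 2: suppose S is finite; derive a contradiction.
  by_contra hinf
  rw [Set.not_infinite] at hinf
  have hfin := hinf
  obtain ⟨M, hM⟩ := hfin.bddAbove
  obtain ⟨m, hm⟩ := hfin.bddBelow
  -- pick a Pell solution with large w
  obtain ⟨x, w, hx, hw, hNw, hxw⟩ := pell_large (4 * a ^ 3) hd hnds (M - m)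
  have hxw' : x ^ 2 - 4 * a ^ 3 * (-w) ^ 2 = 1 := by rw [neg_pow]; simpa using hxw
  set Tp : ℤ := (2 * x ^ 2 - 1) * t₁ + 4 * a ^ 2 * b * w ^ 2 + 4 * a * x * w * y₁ with hTp
  set Tm : ℤ := (2 * x ^ 2 - 1) * t₁ + 4 * a ^ 2 * b * (-w) ^ 2 + 4 * a * x * (-w) * y₁ with hTm
  have hTpS : Tp ∈ S := ⟨_, pell_key a b c t₁ y₁ x w heq₁ hxw⟩
  have hTmS : Tm ∈ S := ⟨_, pell_key a b c t₁ y₁ x (-w) heq₁ hxw'⟩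
  have hdiff : Tp - Tm = 8 * a * x * w * y₁ := by rw [hTp, hTm]; ring
  have h1 : Tp ≤ M := hM hTpS
  have h2 : Tm ≤ M := hM hTmS
  have h3 : m ≤ Tp := hm hTpS
  have h4 : m ≤ Tm := hm hTmS
  have ha1 : (1 : ℤ) ≤ a := ha
  have hax : (1 : ℤ) ≤ a * x := one_le_mul_of_one_le_of_one_le ha1 hx
  rcases hy₁.lt_or_gt with hneg | hpos
  · -- y₁ < 0: Tm - Tp = 8axw(-y₁) ≥ 8w > M - m
    have hprod : (1 : ℤ) ≤ a * x * (-y₁) :=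
      one_le_mul_of_one_le_of_one_le hax (by linarith)
    have : Tm - Tp ≥ 8 * w := by
      nlinarith [mul_nonneg (by linarith : (0:ℤ) ≤ w)
        (by linarith : (0:ℤ) ≤ a * x * (-y₁) - 1)]
    linarith
  · -- y₁ > 0: Tp - Tm ≥ 8w > M - m
    have hprod : (1 : ℤ) ≤ a * x * y₁ :=
      one_le_mul_of_one_le_of_one_le hax (by linarith)
    have : Tp - Tm ≥ 8 * w := by
      nlinarith [mul_nonneg (by linarith : (0:ℤ) ≤ w)
        (by linarith : (0:ℤ) ≤ a * x * y₁ - 1)]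
    linarith
end

section
/- There are infinitely many integers t such that 2(9t^2 - 10t + 3) = 18t^2 - 20t + 6 is a perfect square; in particular at t = 1 its value is 4 = 2^2. -/
private def pellSeq : ℕ → ℤ × ℤ
  | 0 => (1, 1)
  | n + 1 =>
    let p := pellSeq n
    (577 * p.1 + 272 * p.2 - 320, 1224 * p.1 + 577 * p.2 - 680)

private lemma pellSeq_inv (n : ℕ) :
    (9 * (pellSeq n).1 - 5) ^ 2 - 18 * (pellSeq n).2 ^ 2 = -2 ∧
      1 ≤ (pellSeq n).1 ∧ 1 ≤ (pellSeq n).2 := by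
  induction n with
  | zero => norm_num [pellSeq]
  | succ n ih =>
    obtain ⟨h1, h2, h3⟩ := ih
    refine ⟨?_, ?_, ?_⟩
    · simp only [pellSeq]; ring_nf; ring_nf at h1; linarith
    · simp only [pellSeq]; linarith
    · simp only [pellSeq]; linarith

private lemma pellSeq_strictMono : StrictMono fun n => (pellSeq n).1 := by
  apply strictMono_nat_of_lt_succ
  intro n
  obtain ⟨_, h2, h3⟩ := pellSeq_inv n
  show (pellSeq n).1 < (pellSeq (n + 1)).1
  simp only [pellSeq]
  linarith

/-- There are infinitely many integers `t` such that `2(9t² - 10t + 3)` is a perfect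
square; in particular at `t = 1` its value is `4 = 2²`. -/
theorem elkies_first_case_pell :
    {t : ℤ | ∃ y : ℤ, 2 * (9 * t ^ 2 - 10 * t + 3) = y ^ 2}.Infinite ∧
      2 * (9 * (1 : ℤ) ^ 2 - 10 * 1 + 3) = 2 ^ 2 := by
  constructor
  · apply Set.infinite_of_injective_forall_mem
      (f := fun n => (pellSeq n).1) pellSeq_strictMono.injective
    intro n
    obtain ⟨h1, _, _⟩ := pellSeq_inv n
    refine ⟨2 * (pellSeq n).2, ?_⟩
    have h9 : 9 * (2 * (9 * (pellSeq n).1 ^ 2 - 10 * (pellSeq n).1 + 3)) =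
        9 * ((2 * (pellSeq n).2) ^ 2) := by ring_nf; ring_nf at h1; linarith
    exact mul_left_cancel₀ (by norm_num) h9
  · norm_num
end

section
/- There are infinitely many integers t such that X(t)^3 + 132·X(t) - 144(8t - 1) is a perfect square, where X(t) = 6(108t^4 - 120t^3 + 72t^2 - 28t + 5). Consequently, there are infinitely many integers t for which the elliptic curve model y^2 = x^3 + 132x - 144(8t-1) has an integral point with x-coordinate X(t). -/
private def pell : ℕ → ℤ × ℤ
  | 0 => (1, 2)
  | n + 1 =>
    let p := pell n
    (577 * p.1 + 136 * p.2 - 320, 2448 * p.1 + 577 * p.2 - 1360)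

private lemma pell_inv (n : ℕ) :
    (pell n).2 ^ 2 = 18 * (pell n).1 ^ 2 - 20 * (pell n).1 + 6 ∧
      1 ≤ (pell n).1 ∧ 2 ≤ (pell n).2 := by
  induction n with
  | zero => norm_num [pell]
  | succ n ih =>
    obtain ⟨h, ht, hs⟩ := ih
    refine ⟨?_, ?_, ?_⟩
    · simp only [pell]
      ring_nf
      ring_nf at h
      linarith [h]
    · show (1:ℤ) ≤ 577 * (pell n).1 + 136 * (pell n).2 - 320
      nlinarith
    · show (2:ℤ) ≤ 2448 * (pell n).1 + 577 * (pell n).2 - 1360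
      nlinarith

private lemma pell_lt (n : ℕ) : (pell n).1 < (pell (n + 1)).1 := by
  obtain ⟨_, ht, hs⟩ := pell_inv n
  show (pell n).1 < 577 * (pell n).1 + 136 * (pell n).2 - 320
  nlinarith

/-- There are infinitely many integers `t` such that
`X(t)³ + 132·X(t) - 144(8t - 1)` is a perfect square, where
`X(t) = 6(108t⁴ - 120t³ + 72t² - 28t + 5)`; that is, infinitely many integers `t`
for which the curve `y² = x³ + 132x - 144(8t - 1)` has an integral point with
x-coordinate `X(t)`. -/
theorem elkies_first_case_infinitely_many_integral_points
    (Xf : ℤ → ℤ)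
    (hX : ∀ t, Xf t = 6 * (108 * t ^ 4 - 120 * t ^ 3 + 72 * t ^ 2 - 28 * t + 5)) :
    {t : ℤ | ∃ y : ℤ,
        y ^ 2 = (Xf t) ^ 3 + 132 * Xf t - 144 * (8 * t - 1)}.Infinite := by
  have hmono : StrictMono (fun n => (pell n).1) :=
    strictMono_nat_of_lt_succ pell_lt
  apply Set.infinite_of_injective_forall_mem (f := fun n => (pell n).1) hmono.injective
  intro n
  obtain ⟨hs, -, -⟩ := pell_inv n
  set t := (pell n).1 with htdef
  set s := (pell n).2 with hsdef
  refine ⟨72 * (54 * t ^ 5 - 60 * t ^ 4 + 45 * t ^ 3 - 21 * t ^ 2 + 6 * t - 1) * s, ?_⟩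
  rw [hX]
  linear_combination (5184 * (54 * t ^ 5 - 60 * t ^ 4 + 45 * t ^ 3 - 21 * t ^ 2 + 6 * t - 1) ^ 2) * hs
end

section
/- The polynomials with rational coefficients X(t) = t^4 + t^3 + (9/2)t^2 + (61/8)t + 311/64, Y(t) = t^5 + (55/8)t^3 + (77/16)t^2 + (165/16)t + 715/64, Q(t) = t^2 + 3t + 11/4, A = 216513/4096, B(t) = (531441/8192)t - 3720087/131072 satisfy the identity X(t)^3 + A·X(t) + B(t) = Q(t)·Y(t)^2 in ℚ[t]. -/
open Polynomial

/-- The rational polynomials `X(t) = t⁴ + t³ + (9/2)t² + (61/8)t + 311/64`,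
`Y(t) = t⁵ + (55/8)t³ + (77/16)t² + (165/16)t + 715/64`, `Q(t) = t² + 3t + 11/4`,
`A = 216513/4096`, `B(t) = (531441/8192)t - 3720087/131072` satisfy
`X³ + A·X + B = Q·Y²` in `ℚ[t]`. -/
theorem elkies_first_case_raw_identity
    (Xp Yp Qp Bp : ℚ[X])
    (hX : Xp = X ^ 4 + X ^ 3 + C (9 / 2) * X ^ 2 + C (61 / 8) * X + C (311 / 64))
    (hY : Yp = X ^ 5 + C (55 / 8) * X ^ 3 + C (77 / 16) * X ^ 2
        + C (165 / 16) * X + C (715 / 64))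
    (hQ : Qp = X ^ 2 + 3 * X + C (11 / 4))
    (hB : Bp = C (531441 / 8192) * X - C (3720087 / 131072)) :
    Xp ^ 3 + C (216513 / 4096) * Xp + Bp = Qp * Yp ^ 2 := by
  subst hX hY hQ hB
  apply Polynomial.funext
  intro x
  simp only [eval_add, eval_sub, eval_mul, eval_pow, eval_C, eval_X, eval_ofNat]
  ring
end

section
/- In the quartic number field K = ℚ(θ), where θ is a root of z^4 - 2z^3 - 4z^2 + 5z - 2, the elements η1 = θ^3 + θ^2 - 2θ + 1 and η2 = θ^3 - 3θ + 1 are units of the ring of integers of K (i.e., both η1, η2 and their inverses are algebraic integers). -/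
/-- In the quartic number field `K = ℚ(θ)`, with `θ` a root of
`z⁴ - 2z³ - 4z² + 5z - 2`, the elements `η1 = θ³ + θ² - 2θ + 1` and
`η2 = θ³ - 3θ + 1` are units of the ring of integers of `K`: both they and their
inverses are algebraic integers. -/
theorem quartic_field_fundamental_units
    {K : Type*} [Field K] [Algebra ℚ K] (θ : K)
    (hroot : θ ^ 4 - 2 * θ ^ 3 - 4 * θ ^ 2 + 5 * θ - 2 = 0)
    (hgen : Algebra.adjoin ℚ ({θ} : Set K) = ⊤)
    (hrank : Module.finrank ℚ K = 4) :
    IsIntegral ℤ (θ ^ 3 + θ ^ 2 - 2 * θ + 1) ∧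
      IsIntegral ℤ (θ ^ 3 + θ ^ 2 - 2 * θ + 1)⁻¹ ∧
      IsIntegral ℤ (θ ^ 3 - 3 * θ + 1) ∧
      IsIntegral ℤ (θ ^ 3 - 3 * θ + 1)⁻¹ := by
  have hθ : IsIntegral ℤ θ := by
    refine ⟨Polynomial.X ^ 4 - Polynomial.C 2 * Polynomial.X ^ 3 -
      Polynomial.C 4 * Polynomial.X ^ 2 + Polynomial.C 5 * Polynomial.X - Polynomial.C 2,
      ?_, ?_⟩
    · monicity!
    · simpa using hroot
  have h2 : IsIntegral ℤ (2 : K) := by simpa using isIntegral_algebraMap (R := ℤ) (A := K) (x := (2 : ℤ))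
  have h3 : IsIntegral ℤ (3 : K) := by simpa using isIntegral_algebraMap (R := ℤ) (A := K) (x := (3 : ℤ))
  have h4 : IsIntegral ℤ (4 : K) := by simpa using isIntegral_algebraMap (R := ℤ) (A := K) (x := (4 : ℤ))
  have h5 : IsIntegral ℤ (5 : K) := by simpa using isIntegral_algebraMap (R := ℤ) (A := K) (x := (5 : ℤ))
  have h15 : IsIntegral ℤ (15 : K) := by simpa using isIntegral_algebraMap (R := ℤ) (A := K) (x := (15 : ℤ))
  have h1 : IsIntegral ℤ (1 : K) := isIntegral_one
  have he1 : IsIntegral ℤ (θ ^ 3 + θ ^ 2 - 2 * θ + 1) :=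
    (((hθ.pow 3).add (hθ.pow 2)).sub (h2.mul hθ)).add h1
  have he2 : IsIntegral ℤ (θ ^ 3 - 3 * θ + 1) :=
    ((hθ.pow 3).sub (h3.mul hθ)).add h1
  have hi1 : (θ ^ 3 + θ ^ 2 - 2 * θ + 1)⁻¹ = -(3 * θ ^ 3) + 4 * θ ^ 2 + 15 * θ - 5 := by
    apply inv_eq_of_mul_eq_one_right
    linear_combination (-3 * θ ^ 2 - 5 * θ + 3) * hroot
  have hi2 : (θ ^ 3 - 3 * θ + 1)⁻¹ = -θ ^ 3 + 3 * θ ^ 2 - 1 := by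
    apply inv_eq_of_mul_eq_one_right
    linear_combination (-θ ^ 2 + θ + 1) * hroot
  refine ⟨he1, ?_, he2, ?_⟩
  · rw [hi1]
    exact (((((h3.mul (hθ.pow 3)).neg).add (h4.mul (hθ.pow 2))).add
      (h15.mul hθ)).sub h5)
  · rw [hi2]
    exact (((hθ.pow 3).neg.add (h3.mul (hθ.pow 2))).sub h1)
end

section
/- In the quartic number field K = ℚ(θ), where θ is a root of z^4 - 2z^3 - 4z^2 + 5z - 2, set c2 = 3·p2^7·q2·β·η1^2·η2^{-1}. Then each of the following three pairs (u, v) of elements of K satisfies u^2 - c2·v^2 = 1 (so that f_i = u + v√c2 is a unit of relative norm 1 in K(√c2)): (i) u = r2·η1^{-1}·η2·(3θ^3 - 19θ^2 + 20θ - 5), v = p2^{-1}·q2·p3^{-1}·η1^{-3}·η2·(θ^3 + 2θ^2 - θ + 1); (ii) u = η1·η2^{-1}·(19θ^3 - 51θ^2 + 38θ - 5), v = 4·p2^4·p3^{-1}·η1^{-1}·η2^{-1}; (iii) u = r2·η1·η2·(19θ^3 - 14θ^2 - 71θ - 41), v = p2·q2^2·η1^{-4}·η2^3·(6θ^2 -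 2θ + 1). -/
/-- In the quartic number field `K = ℚ(θ)`, with `θ` a root of
`z⁴ - 2z³ - 4z² + 5z - 2`, and `c2 = 3·p2⁷·q2·β·η1²·η2⁻¹`, each of the three
pairs `(u, v)` below satisfies `u² - c2·v² = 1`, so that `u + v√c2` is a unit of
relative norm 1 in `K(√c2)`. -/
theorem quartic_field_relative_pell_units
    {K : Type*} [Field K] [Algebra ℚ K] (θ : K)
    (hroot : θ ^ 4 - 2 * θ ^ 3 - 4 * θ ^ 2 + 5 * θ - 2 = 0)
    (hgen : Algebra.adjoin ℚ ({θ} : Set K) = ⊤)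
    (hrank : Module.finrank ℚ K = 4)
    (p2 q2 r2 p3 η1 η2 β c2 : K)
    (hp2 : p2 = θ) (hq2 : q2 = θ - 1) (hr2 : r2 = θ ^ 2 - θ - 5)
    (hp3 : p3 = 2 * θ ^ 2 - 2 * θ + 1)
    (hη1 : η1 = θ ^ 3 + θ ^ 2 - 2 * θ + 1) (hη2 : η2 = θ ^ 3 - 3 * θ + 1)
    (hβ : β = 2 * θ ^ 3 + 2 * θ ^ 2 - 6 * θ - 3)
    (hc2 : c2 = 3 * p2 ^ 7 * q2 * β * η1 ^ 2 * η2⁻¹) :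
    (r2 * η1⁻¹ * η2 * (3 * θ ^ 3 - 19 * θ ^ 2 + 20 * θ - 5)) ^ 2
        - c2 * (p2⁻¹ * q2 * p3⁻¹ * η1⁻¹ ^ 3 * η2
            * (θ ^ 3 + 2 * θ ^ 2 - θ + 1)) ^ 2 = 1 ∧
      (η1 * η2⁻¹ * (19 * θ ^ 3 - 51 * θ ^ 2 + 38 * θ - 5)) ^ 2
        - c2 * (4 * p2 ^ 4 * p3⁻¹ * η1⁻¹ * η2⁻¹) ^ 2 = 1 ∧
      (r2 * η1 * η2 * (19 * θ ^ 3 - 14 * θ ^ 2 - 71 * θ - 41)) ^ 2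
        - c2 * (p2 * q2 ^ 2 * η1⁻¹ ^ 4 * η2 ^ 3
            * (6 * θ ^ 2 - 2 * θ + 1)) ^ 2 = 1 := by
  haveI : CharZero K := charZero_of_injective_algebraMap (algebraMap ℚ K).injective
  have hmulp2 : p2 * ((5/2 : K) + (-2 : K) * θ + (-1 : K) * θ ^ 2 + (1/2 : K) * θ ^ 3) = 1 := by
    rw [hp2]; linear_combination ((1/2 : K)) * hroot
  have hip2 : p2⁻¹ = ((5/2 : K) + (-2 : K) * θ + (-1 : K) * θ ^ 2 + (1/2 : K) * θ ^ 3) := inv_eq_of_mul_eq_one_right hmulp2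
  have hmulp3 : p3 * ((11/3 : K) + (2/3 : K) * θ + (-2/3 : K) * θ ^ 2) = 1 := by
    rw [hp3]; linear_combination ((-4/3 : K)) * hroot
  have hip3 : p3⁻¹ = ((11/3 : K) + (2/3 : K) * θ + (-2/3 : K) * θ ^ 2) := inv_eq_of_mul_eq_one_right hmulp3
  have hmuleta1 : η1 * ((-5 : K) + (15 : K) * θ + (4 : K) * θ ^ 2 + (-3 : K) * θ ^ 3) = 1 := by
    rw [hη1]; linear_combination ((3 : K) + (-5 : K) * θ + (-3 : K) * θ ^ 2) * hroot
  have hieta1 : η1⁻¹ = ((-5 : K) + (15 : K) * θ + (4 : K) * θ ^ 2 + (-3 : K) * θ ^ 3) := inv_eq_of_mul_eq_one_right hmuleta1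
  have hmuleta2 : η2 * ((-1 : K) + (3 : K) * θ ^ 2 + (-1 : K) * θ ^ 3) = 1 := by
    rw [hη2]; linear_combination ((1 : K) + (1 : K) * θ + (-1 : K) * θ ^ 2) * hroot
  have hieta2 : η2⁻¹ = ((-1 : K) + (3 : K) * θ ^ 2 + (-1 : K) * θ ^ 3) := inv_eq_of_mul_eq_one_right hmuleta2
  have hC : c2 = (465390 : K) + (-1003725 : K) * θ + (588297 : K) * θ ^ 2 + (661806 : K) * θ ^ 3 := by
    rw [hc2, hieta2, hp2, hq2, hβ, hη1]; linear_combination ((232695 : K) + (79875 : K) * θ + (28446 : K) * θ ^ 2 + (9573 : K) * θ ^ 3 + (3513 : K) * θ ^ 4 + (1128 : K) * θ ^ 5 + (444 : K) * θ ^ 6 + (132 : K) * θ ^ 7 + (57 : K) * θ ^ 8 + (-18 : K) * θ ^ 9 + (42 : K) * θ ^ 10 + (54 : K) * θ ^ 11 + (-96 : K) * θ ^ 12 + (9 : K) * θ ^ 13 + (42 : K) * θ ^ 14 + (-6 : K) * θ ^ 15 + (-6 : K) * θ ^ 16) * hroot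
  have hU1 : r2 * η1⁻¹ * η2 * (3 * θ ^ 3 - 19 * θ ^ 2 + 20 * θ - 5) = (-149 : K) + (133 : K) * θ + (57 : K) * θ ^ 2 + (-30 : K) * θ ^ 3 := by
    rw [hr2, hieta1, hη2]; linear_combination ((-12 : K) + (-576 : K) * θ + (725 : K) * θ ^ 2 + (274 : K) * θ ^ 3 + (-425 : K) * θ ^ 4 + (-4 : K) * θ ^ 5 + (60 : K) * θ ^ 6 + (-9 : K) * θ ^ 7) * hroot
  have hV1 : p2⁻¹ * q2 * p3⁻¹ * η1⁻¹ ^ 3 * η2 * (θ ^ 3 + 2 * θ ^ 2 - θ + 1) = (-231/2 : K) + (-4639/3 : K) * θ + (-787/3 : K) * θ ^ 2 + (1703/6 : K) * θ ^ 3 := by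
    rw [hip2, hq2, hip3, hieta1, hη2]; linear_combination ((-1892/3 : K) + (36151/6 : K) * θ + (-200279/6 : K) * θ ^ 2 + (166018/3 : K) * θ ^ 3 + (-32345 : K) * θ ^ 4 + (-341425/6 : K) * θ ^ 5 + (667627/6 : K) * θ ^ 6 + (18295/6 : K) * θ ^ 7 + (-92606 : K) * θ ^ 8 + (46970/3 : K) * θ ^ 9 + (111154/3 : K) * θ ^ 10 + (-47521/6 : K) * θ ^ 11 + (-23458/3 : K) * θ ^ 12 + (3561/2 : K) * θ ^ 13 + (5029/6 : K) * θ ^ 14 + (-399/2 : K) * θ ^ 15 + (-36 : K) * θ ^ 16 + (9 : K) * θ ^ 17) * hroot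
  have hU2 : η1 * η2⁻¹ * (19 * θ ^ 3 - 51 * θ ^ 2 + 38 * θ - 5) = (-399 : K) + (1216 : K) * θ + (-1456 : K) * θ ^ 2 + (386 : K) * θ ^ 3 := by
    rw [hη1, hieta2]; linear_combination ((-202 : K) + (127 : K) * θ + (-65 : K) * θ ^ 2 + (-19 : K) * θ ^ 3 + (51 : K) * θ ^ 4 + (-19 : K) * θ ^ 5) * hroot
  have hV2 : 4 * p2 ^ 4 * p3⁻¹ * η1⁻¹ * η2⁻¹ = (24 : K) + (-68/3 : K) * θ + (-8/3 : K) * θ ^ 2 + (8/3 : K) * θ ^ 3 := by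
    rw [hp2, hip3, hieta1, hieta2]; linear_combination ((12 : K) + (56/3 : K) * θ + (64/3 : K) * θ ^ 2 + (16/3 : K) * θ ^ 3 + (-236/3 : K) * θ ^ 4 + (-116 : K) * θ ^ 5 + (116/3 : K) * θ ^ 6 + (80/3 : K) * θ ^ 7 + (-8 : K) * θ ^ 8) * hroot
  have hU3 : r2 * η1 * η2 * (19 * θ ^ 3 - 14 * θ ^ 2 - 71 * θ - 41) = (329 : K) + (-843 : K) * θ + (465 : K) * θ ^ 2 + (540 : K) * θ ^ 3 := by
    rw [hr2, hη1, hη2]; linear_combination ((62 : K) + (48 : K) * θ + (451 : K) * θ ^ 2 + (282 : K) * θ ^ 3 + (-217 : K) * θ ^ 4 + (-156 : K) * θ ^ 5 + (24 : K) * θ ^ 6 + (19 : K) * θ ^ 7) * hroot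
  have hV3 : p2 * q2 ^ 2 * η1⁻¹ ^ 4 * η2 ^ 3 * (6 * θ ^ 2 - 2 * θ + 1) = (920 : K) + (-1859 : K) * θ + (-549 : K) * θ ^ 2 + (378 : K) * θ ^ 3 := by
    rw [hp2, hq2, hieta1, hη2]; linear_combination ((460 : K) + (-92 : K) * θ + (6388 : K) * θ ^ 2 + (-71867 : K) * θ ^ 3 + (392316 : K) * θ ^ 4 + (-1438610 : K) * θ ^ 5 + (3314754 : K) * θ ^ 6 + (-4461017 : K) * θ ^ 7 + (1540550 : K) * θ ^ 8 + (5603837 : K) * θ ^ 9 + (-8056778 : K) * θ ^ 10 + (141859 : K) * θ ^ 11 + (6487067 : K) * θ ^ 12 + (-2734299 : K) * θ ^ 13 + (-2302285 : K) * θ ^ 14 + (1589919 : K) * θ ^ 15 + (361984 : K) * θ ^ 16 + (-415946 : K) * θ ^ 17 + (-4488 : K) * θ ^ 18 + (53496 : K) * θ ^ 19 + (-5535 : K) * θ ^ 20 + (-2754 : K) * θ ^ 21 + (486 : K) * θ ^ 22) * hroot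
  refine ⟨?_, ?_, ?_⟩
  · rw [hU1, hV1, hC]; linear_combination ((12416793495/4 : K) + (336739586483/4 : K) * θ + (1198840104305/2 : K) * θ ^ 2 + (1518611318855/4 : K) * θ ^ 3 + (-665654867839/12 : K) * θ ^ 4 + (-106631984303/2 : K) * θ ^ 5) * hroot
  · rw [hU2, hV2, hC]; linear_combination ((133952720 : K) + (-206877976 : K) * θ + (18803844 : K) * θ ^ 2 + (63611712 : K) * θ ^ 3 + (-12550336/3 : K) * θ ^ 4 + (-4706176 : K) * θ ^ 5) * hroot
  · rw [hU3, hV3, hC]; linear_combination ((196952993880 : K) + (-728340867153 : K) * θ + (319966467543 : K) * θ ^ 2 + (742970046186 : K) * θ ^ 3 + (1497403908 : K) * θ ^ 4 + (-94561488504 : K) * θ ^ 5) * hroot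
end

section
/- In the quartic number field K = ℚ(θ), where θ is a root of z^4 - 2z^3 - 4z^2 + 5z - 2, define polynomials in K[t]: Q(t) = 3p2^7 q2 β η1^2 η2^{-1}·t^2 + 2q2^3 η1^2 β(θ^3 - θ^2 + 11)·t + q2^2 β^2 η2^2; A(t) = -12 q2^4 r2 p3 β^2 η1 η2^{-3}(θ^3 - θ + 1)·t - q2^2 p3 β^2 η1^{-1} η2^{-2}(θ^3 - θ + 1)(9θ^3 - 2θ^2 + 5θ + 9); B(t) = -6 q2^7 r2^2 β^3 η1 η2^{-4}(2θ - 1)^4·t - q2^4 r2 β^3 η1^{-1} η2^{-3}(2θ - 1)^4(4θ^3 + 18θ^2 - 16θ + 1); and X(t) = 2^4 3^4 p2^5 q2^7 β η1^8 η2^{-4}·t^6 + 2^3 3^4 q2^5 r2 β η1^9 η2^{-4}(17θ^3 + 2θ^2 - 71θ + 33)·t^5 + 2^2 3^3 q2 β η1^8 η2^{-3}(1463θ^3 - 2436θ^2 - 2667θ + 1903)·t^4 + 24 q2 β η1^6 η2^{-2}(25901θ^3 + 32060θ^2 - 52457θ + 15455)·t^3 + 12 q2^2 p3 β η1^3(40374θ^3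 + 47422θ^2 - 61976θ + 37707)·t^2 + 2 q2^2 r2^2 p3 β η1^3 η2(7081θ^3 - 854θ^2 + 90791θ - 23035)·t + q2 β η1 η2^2(190035θ^3 + 199008θ^2 - 174189θ + 50449). Then there exists a polynomial Y(t) ∈ K[t] of degree 8 such that X(t)^3 + A(t)·X(t) + B(t) = Q(t)·Y(t)^2 in K[t]. -/
open Polynomial

set_option maxHeartbeats 4000000

/-- The second-case Elkies–Pell–Zagier solution: in the quartic number field
`K = ℚ(θ)`, with `θ` a root of `z⁴ - 2z³ - 4z² + 5z - 2`, the displayed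
polynomials `X, A, B, Q ∈ K[t]` admit a degree-8 polynomial `Y ∈ K[t]` with
`X³ + A·X + B = Q·Y²`. -/
theorem elkies_second_case_solution
    {K : Type*} [Field K] [Algebra ℚ K] (θ : K)
    (hroot : θ ^ 4 - 2 * θ ^ 3 - 4 * θ ^ 2 + 5 * θ - 2 = 0)
    (hgen : Algebra.adjoin ℚ ({θ} : Set K) = ⊤)
    (hrank : Module.finrank ℚ K = 4)
    (p2 q2 r2 p3 η1 η2 β : K)
    (hp2 : p2 = θ) (hq2 : q2 = θ - 1) (hr2 : r2 = θ ^ 2 - θ - 5)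
    (hp3 : p3 = 2 * θ ^ 2 - 2 * θ + 1)
    (hη1 : η1 = θ ^ 3 + θ ^ 2 - 2 * θ + 1) (hη2 : η2 = θ ^ 3 - 3 * θ + 1)
    (hβ : β = 2 * θ ^ 3 + 2 * θ ^ 2 - 6 * θ - 3)
    (Qp Ap Bp Xp : Polynomial K)
    (hQ : Qp = C (3 * p2 ^ 7 * q2 * β * η1 ^ 2 * η2⁻¹) * X ^ 2
        + C (2 * q2 ^ 3 * η1 ^ 2 * β * (θ ^ 3 - θ ^ 2 + 11)) * X
        + C (q2 ^ 2 * β ^ 2 * η2 ^ 2))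
    (hA : Ap = -(C (12 * q2 ^ 4 * r2 * p3 * β ^ 2 * η1 * η2⁻¹ ^ 3
            * (θ ^ 3 - θ + 1)) * X)
        - C (q2 ^ 2 * p3 * β ^ 2 * η1⁻¹ * η2⁻¹ ^ 2 * (θ ^ 3 - θ + 1)
            * (9 * θ ^ 3 - 2 * θ ^ 2 + 5 * θ + 9)))
    (hB : Bp = -(C (6 * q2 ^ 7 * r2 ^ 2 * β ^ 3 * η1 * η2⁻¹ ^ 4
            * (2 * θ - 1) ^ 4) * X)
        - C (q2 ^ 4 * r2 * β ^ 3 * η1⁻¹ * η2⁻¹ ^ 3 * (2 * θ - 1) ^ 4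
            * (4 * θ ^ 3 + 18 * θ ^ 2 - 16 * θ + 1)))
    (hX : Xp = C (2 ^ 4 * 3 ^ 4 * p2 ^ 5 * q2 ^ 7 * β * η1 ^ 8 * η2⁻¹ ^ 4) * X ^ 6
        + C (2 ^ 3 * 3 ^ 4 * q2 ^ 5 * r2 * β * η1 ^ 9 * η2⁻¹ ^ 4
            * (17 * θ ^ 3 + 2 * θ ^ 2 - 71 * θ + 33)) * X ^ 5
        + C (2 ^ 2 * 3 ^ 3 * q2 * β * η1 ^ 8 * η2⁻¹ ^ 3
            * (1463 * θ ^ 3 - 2436 * θ ^ 2 - 2667 * θ + 1903)) * X ^ 4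
        + C (24 * q2 * β * η1 ^ 6 * η2⁻¹ ^ 2
            * (25901 * θ ^ 3 + 32060 * θ ^ 2 - 52457 * θ + 15455)) * X ^ 3
        + C (12 * q2 ^ 2 * p3 * β * η1 ^ 3
            * (40374 * θ ^ 3 + 47422 * θ ^ 2 - 61976 * θ + 37707)) * X ^ 2
        + C (2 * q2 ^ 2 * r2 ^ 2 * p3 * β * η1 ^ 3 * η2
            * (7081 * θ ^ 3 - 854 * θ ^ 2 + 90791 * θ - 23035)) * X
        + C (q2 * β * η1 * η2 ^ 2
            * (190035 * θ ^ 3 + 199008 * θ ^ 2 - 174189 * θ + 50449))) :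
    ∃ Yp : Polynomial K, Yp.degree = 8 ∧
      Xp ^ 3 + Ap * Xp + Bp = Qp * Yp ^ 2 := by
  have hinv1 : η1⁻¹ = ((-5 + 15 * θ + 4 * θ ^ 2 - 3 * θ ^ 3) : K) := by
    refine inv_eq_of_mul_eq_one_right ?_
    rw [hη1]; linear_combination ((3 - 5 * θ - 3 * θ ^ 2) : K) * hroot
  have hinv2 : η2⁻¹ = ((-1 + 3 * θ ^ 2 - 1 * θ ^ 3) : K) := by
    refine inv_eq_of_mul_eq_one_right ?_
    rw [hη2]; linear_combination ((1 + θ - 1 * θ ^ 2) : K) * hroot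
  have hc8 : (((2957034338076004992 - 7652673376223670720 * θ + 7163124697011070656 * θ ^ 2 + 779885476344366336 * θ ^ 3) : K)) * ((559488715011576410 + 1390792575837930997 * θ + 135354092140987335 * θ ^ 2 - 239497691730282389 * θ ^ 3) : K) = 156274458624 := by
    linear_combination ((-827213671027625723594655784337490048 - 1983552682682691654630950491225636032 * θ - 186780771398447487141297010545256704 * θ ^ 2) : K) * hroot
  have hc8ne : (((2957034338076004992 - 7652673376223670720 * θ + 7163124697011070656 * θ ^ 2 + 779885476344366336 * θ ^ 3) : K)) ≠ 0 := by
    intro h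
    rw [h, zero_mul] at hc8
    have : CharZero K := algebraRat.charZero K
    exact absurd hc8.symm (by norm_num)
  have hr : (C θ : Polynomial K) ^ 4 - 2 * (C θ) ^ 3 - 4 * (C θ) ^ 2 + 5 * (C θ) - 2 = 0 := by
    have h := congrArg C hroot
    simpa only [map_sub, map_add, map_mul, map_pow, map_ofNat, map_zero] using h
  have hQ' : Qp = ((43847 - 94337 * (C θ : Polynomial K) + 54853 * (C θ : Polynomial K) ^ 2 + 62953 * (C θ : Polynomial K) ^ 3) + (284882 - 612974 * (C θ : Polynomial K) + 356242 * (C θ : Polynomial K) ^ 2 + 408994 * (C θ : Polynomial K) ^ 3) * X + (465390 - 1003725 * (C θ : Polynomial K) + 588297 * (C θ : Polynomial K) ^ 2 + 661806 * (C θ : Polynomial K) ^ 3) * X ^ 2) := by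
    rw [hQ, hinv2]
    simp only [hp2, hq2, hr2, hp3, hβ, hη1, hη2]
    simp only [map_ofNat, map_mul, map_add, map_sub, map_neg, map_pow, map_one]
    linear_combination ((21919 + 7647 * (C θ : Polynomial K) + 2739 * (C θ : Polynomial K) ^ 2 + 928 * (C θ : Polynomial K) ^ 3 + 157 * (C θ : Polynomial K) ^ 4 + 152 * (C θ : Polynomial K) ^ 5 + 144 * (C θ : Polynomial K) ^ 6 - 16 * (C θ : Polynomial K) ^ 7 - 24 * (C θ : Polynomial K) ^ 8 + 8 * (C θ : Polynomial K) ^ 9 + 4 * (C θ : Polynomial K) ^ 10) + (142408 + 49698 * (C θ : Polynomial K) + 17344 * (C θ : Polynomial K) ^ 2 + 5606 * (C θ : Polynomial K) ^ 3 + 2528 * (C θ : Polynomial K) ^ 4 + 752 * (C θ : Polynomial K) ^ 5 - 14 * (C θ : Polynomial K) ^ 6 + 180 * (C θ : Polynomial K) ^ 7 + 78 * (C θ : Polynomial K) ^ 8 - 16 * (C θ : Polynomial K) ^ 9 + 4 * (C θ : Polynomial K) ^ 10 + 4 * (C θ : Polynomial K) ^ 11) * X + (232695 + 79875 * (C θ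 : Polynomial K) + 28446 * (C θ : Polynomial K) ^ 2 + 9573 * (C θ : Polynomial K) ^ 3 + 3513 * (C θ : Polynomial K) ^ 4 + 1128 * (C θ : Polynomial K) ^ 5 + 444 * (C θ : Polynomial K) ^ 6 + 132 * (C θ : Polynomial K) ^ 7 + 57 * (C θ : Polynomial K) ^ 8 - 18 * (C θ : Polynomial K) ^ 9 + 42 * (C θ : Polynomial K) ^ 10 + 54 * (C θ : Polynomial K) ^ 11 - 96 * (C θ : Polynomial K) ^ 12 + 9 * (C θ : Polynomial K) ^ 13 + 42 * (C θ : Polynomial K) ^ 14 - 6 * (C θ : Polynomial K) ^ 15 - 6 * (C θ : Polynomial K) ^ 16) * X ^ 2) * hr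
  have hA' : Ap = ((-640207 + 1941347 * (C θ : Polynomial K) - 2314850 * (C θ : Polynomial K) ^ 2 + 595536 * (C θ : Polynomial K) ^ 3) + (16302900 - 49474056 * (C θ : Polynomial K) + 59054976 * (C θ : Polynomial K) ^ 2 - 15263076 * (C θ : Polynomial K) ^ 3) * X) := by
    rw [hA, hinv1, hinv2]
    simp only [hp2, hq2, hr2, hp3, hβ, hη1, hη2]
    simp only [map_ofNat, map_mul, map_add, map_sub, map_neg, map_pow, map_one]
    linear_combination ((-320306 + 170606 * (C θ : Polynomial K) - 87751 * (C θ : Polynomial K) ^ 2 + 45876 * (C θ : Polynomial K) ^ 3 - 44932 * (C θ : Polynomial K) ^ 4 + 41495 * (C θ : Polynomial K) ^ 5 + 35626 * (C θ : Polynomial K) ^ 6 - 108230 * (C θ : Polynomial K) ^ 7 - 2155 * (C θ : Polynomial K) ^ 8 + 203536 * (C θ : Polynomial K) ^ 9 - 169738 * (C θ : Polynomial K) ^ 10 - 105185 * (C θ : Polynomial K) ^ 11 + 247790 * (C θ : Polynomial K) ^ 12 - 99735 * (C θ : Polynomial K) ^ 13 - 92170 * (C θ : Polynomial K) ^ 14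 + 106386 * (C θ : Polynomial K) ^ 15 - 15620 * (C θ : Polynomial K) ^ 16 - 26368 * (C θ : Polynomial K) ^ 17 + 12096 * (C θ : Polynomial K) ^ 18 + 892 * (C θ : Polynomial K) ^ 19 - 1416 * (C θ : Polynomial K) ^ 20 + 216 * (C θ : Polynomial K) ^ 21) + (8151720 - 4359024 * (C θ : Polynomial K) + 2324724 * (C θ : Polynomial K) ^ 2 - 1232088 * (C θ : Polynomial K) ^ 3 + 679380 * (C θ : Polynomial K) ^ 4 - 451164 * (C θ : Polynomial K) ^ 5 + 239136 * (C θ : Polynomial K) ^ 6 + 214140 * (C θ : Polynomial K) ^ 7 - 463416 * (C θ : Polynomial K) ^ 8 - 298440 * (C θ : Polynomial K) ^ 9 + 1433244 * (C θ : Polynomial K) ^ 10 - 933612 * (C θ : Polynomial K) ^ 11 - 1236276 * (C θ : Polynomial K) ^ 12 + 2218620 * (C θ : Polynomial K) ^ 13 - 610212 * (C θ : Polynomial K) ^ 14 - 1236408 * (C θ : Polynomial K) ^ 15 + 1135668 * (C θ : Polynomial K) ^ 16 - 28860 * (C θ : Polynomial K) ^ 17 - 413232 * (C θ : Polynomial K)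 ^ 18 + 176472 * (C θ : Polynomial K) ^ 19 + 33264 * (C θ : Polynomial K) ^ 20 - 41616 * (C θ : Polynomial K) ^ 21 + 6864 * (C θ : Polynomial K) ^ 22 + 2352 * (C θ : Polynomial K) ^ 23 - 960 * (C θ : Polynomial K) ^ 24 + 96 * (C θ : Polynomial K) ^ 25) * X) * hr
  have hB' : Bp = ((-800188587 + 2428116614 * (C θ : Polynomial K) - 2898037802 * (C θ : Polynomial K) ^ 2 + 748612557 * (C θ : Polynomial K) ^ 3) + (28706957994 - 87109423104 * (C θ : Polynomial K) + 103968293880 * (C θ : Polynomial K) ^ 2 - 26857366734 * (C θ : Polynomial K) ^ 3) * X) := by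
    rw [hB, hinv1, hinv2]
    simp only [hp2, hq2, hr2, hp3, hβ, hη1, hη2]
    simp only [map_ofNat, map_mul, map_add, map_sub, map_neg, map_pow, map_one]
    linear_combination ((-400093956 + 213815047 * (C θ : Polynomial K) - 114237684 * (C θ : Polynomial K) ^ 2 + 61145299 * (C θ : Polynomial K) ^ 3 - 33534852 * (C θ : Polynomial K) ^ 4 + 18247350 * (C θ : Polynomial K) ^ 5 - 1686209 * (C θ : Polynomial K) ^ 6 - 12095329 * (C θ : Polynomial K) ^ 7 - 29170997 * (C θ : Polynomial K) ^ 8 + 114607630 * (C θ : Polynomial K) ^ 9 - 7165509 * (C θ : Polynomial K) ^ 10 - 359424454 * (C θ : Polynomial K) ^ 11 + 330988656 * (C θ : Polynomial K) ^ 12 + 498573790 * (C θ : Polynomial K) ^ 13 - 980252751 * (C θ : Polynomial K) ^ 14 + 38042258 * (C θ : Polynomial K) ^ 15 + 1098776024 * (C θ : Polynomial K) ^ 16 - 785619586 * (C θ : Polynomial K) ^ 17 - 286359672 * (C θ : Polynomial K) ^ 18 + 578591460 * (C θ : Polynomial K) ^ 19 - 140164748 * (C θ : Polynomial K) ^ 20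 - 145428448 * (C θ : Polynomial K) ^ 21 + 90279552 * (C θ : Polynomial K) ^ 22 + 4357080 * (C θ : Polynomial K) ^ 23 - 17081808 * (C θ : Polynomial K) ^ 24 + 3562224 * (C θ : Polynomial K) ^ 25 + 1013152 * (C θ : Polynomial K) ^ 26 - 466176 * (C θ : Polynomial K) ^ 27 + 23552 * (C θ : Polynomial K) ^ 28 + 12032 * (C θ : Polynomial K) ^ 29 - 1536 * (C θ : Polynomial K) ^ 30) + (14353481022 - 7671030462 * (C θ : Polynomial K) + 4099655802 * (C θ : Polynomial K) ^ 2 - 2190655998 * (C θ : Polynomial K) ^ 3 + 1170102120 * (C θ : Polynomial K) ^ 4 - 628072782 * (C θ : Polynomial K) ^ 5 + 346081536 * (C θ : Polynomial K) ^ 6 - 180233574 * (C θ : Polynomial K) ^ 7 + 27263652 * (C θ : Polynomial K) ^ 8 + 47641998 * (C θ : Polynomial K) ^ 9 + 193987104 * (C θ : Polynomial K) ^ 10 - 569854368 * (C θ : Polynomial K) ^ 11 + 124734438 * (C θ : Polynomial K) ^ 12 + 1333361076 * (C θ : Polynomial K) ^ 13 - 1661090586 * (C θ : Polynomial K) ^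 14 - 914657478 * (C θ : Polynomial K) ^ 15 + 3631386090 * (C θ : Polynomial K) ^ 16 - 2088825198 * (C θ : Polynomial K) ^ 17 - 2449044210 * (C θ : Polynomial K) ^ 18 + 4127273424 * (C θ : Polynomial K) ^ 19 - 1249122678 * (C θ : Polynomial K) ^ 20 - 1831928628 * (C θ : Polynomial K) ^ 21 + 1830780438 * (C θ : Polynomial K) ^ 22 - 204249864 * (C θ : Polynomial K) ^ 23 - 592804980 * (C θ : Polynomial K) ^ 24 + 340018380 * (C θ : Polynomial K) ^ 25 + 15543360 * (C θ : Polynomial K) ^ 26 - 82097040 * (C θ : Polynomial K) ^ 27 + 26044632 * (C θ : Polynomial K) ^ 28 + 4125648 * (C θ : Polynomial K) ^ 29 - 4480368 * (C θ : Polynomial K) ^ 30 + 836304 * (C θ : Polynomial K) ^ 31 + 130176 * (C θ : Polynomial K) ^ 32 - 80256 * (C θ : Polynomial K) ^ 33 + 13056 * (C θ : Polynomial K) ^ 34 - 768 * (C θ : Polynomial K) ^ 35) * X) * hr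
  have hX' : Xp = ((83092083531 - 178789765960 * (C θ : Polynomial K) + 103912805991 * (C θ : Polynomial K) ^ 2 + 119284352552 * (C θ : Polynomial K) ^ 3) + (1628976629930 - 3505078140248 * (C θ : Polynomial K) + 2037154039392 * (C θ : Polynomial K) ^ 2 + 2338506319402 * (C θ : Polynomial K) ^ 3) * X + (13306802663796 - 28632345876552 * (C θ : Polynomial K) + 16641191598276 * (C θ : Polynomial K) ^ 2 + 19102752112176 * (C θ : Polynomial K) ^ 3) * X ^ 2 + (57973464151608 - 124740106242768 * (C θ : Polynomial K) + 72495420409368 * (C θ : Polynomial K) ^ 2 + 83229458944080 * (C θ : Polynomial K) ^ 3) * X ^ 3 + (142167020231412 - 305972924233536 * (C θ : Polynomial K) + 177981882346692 * (C θ : Polynomial K) ^ 2 + 203898731440320 * (C θ : Polynomial K) ^ 3) * X ^ 4 + (183899870705016 - 394086223026432 * (C θ : Polynomial K) + 225649711953648 * (C θ : Polynomial K) ^ 2 + 268331208416424 * (C θ : Polynomial K) ^ 3) * X ^ 5 + (118986923787264 - 271763415096480 * (C θ : Polynomial K) + 191077876460016 * (C θ : Polynomial K) ^ 2 + 128537737727760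 * (C θ : Polynomial K) ^ 3) * X ^ 6) := by
    rw [hX, hinv2]
    simp only [hp2, hq2, hr2, hp3, hβ, hη1, hη2]
    simp only [map_ofNat, map_mul, map_add, map_sub, map_neg, map_pow, map_one]
    linear_combination ((41545966092 + 14470823248 * (C θ : Polynomial K) + 5038543802 * (C θ : Polynomial K) ^ 2 + 1753998896 * (C θ : Polynomial K) ^ 3 + 621024918 * (C θ : Polynomial K) ^ 4 + 204019681 * (C θ : Polynomial K) ^ 5 + 65961211 * (C θ : Polynomial K) ^ 6 + 37920176 * (C θ : Polynomial K) ^ 7 + 12166650 * (C θ : Polynomial K) ^ 8 - 2690443 * (C θ : Polynomial K) ^ 9 + 85530 * (C θ : Polynomial K) ^ 10 + 1538226 * (C θ : Polynomial K) ^ 11 + 380070 * (C θ : Polynomial K) ^ 12) + (814486587340 + 283702520376 * (C θ : Polynomial K) + 98710897056 * (C θ : Polynomial K) ^ 2 + 34578921332 * (C θ : Polynomial K) ^ 3 + 12101159086 * (C θ : Polynomial K) ^ 4 + 3091953214 * (C θ : Polynomial K) ^ 5 + 3447477402 * (C θ : Polynomial K) ^ 6 - 676798382 * (C θ : Polynomial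 K) ^ 7 - 1085374690 * (C θ : Polynomial K) ^ 8 + 2500678622 * (C θ : Polynomial K) ^ 9 - 714994998 * (C θ : Polynomial K) ^ 10 - 1245285134 * (C θ : Polynomial K) ^ 11 + 981370030 * (C θ : Polynomial K) ^ 12 + 225670740 * (C θ : Polynomial K) ^ 13 - 399355426 * (C θ : Polynomial K) ^ 14 + 7712966 * (C θ : Polynomial K) ^ 15 + 77390550 * (C θ : Polynomial K) ^ 16 - 5312506 * (C θ : Polynomial K) ^ 17 - 5481836 * (C θ : Polynomial K) ^ 18 - 32828 * (C θ : Polynomial K) ^ 19 - 385140 * (C θ : Polynomial K) ^ 20 + 49816 * (C θ : Polynomial K) ^ 21 + 56648 * (C θ : Polynomial K) ^ 22) * X + (6653402010624 + 2317325542908 * (C θ : Polynomial K) + 807132607692 * (C θ : Polynomial K) ^ 2 + 281101790184 * (C θ : Polynomial K) ^ 3 + 97869929832 * (C θ : Polynomial K) ^ 4 + 34239948024 * (C θ : Polynomial K) ^ 5 + 11689579164 * (C θ : Polynomial K) ^ 6 + 4230367476 * (C θ : Polynomial K) ^ 7 + 1511961096 * (C θ : Polynomial K) ^ 8 + 378826488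 * (C θ : Polynomial K) ^ 9 + 209265552 * (C θ : Polynomial K) ^ 10 + 101190912 * (C θ : Polynomial K) ^ 11 - 3746160 * (C θ : Polynomial K) ^ 12 + 946992 * (C θ : Polynomial K) ^ 13 + 8090112 * (C θ : Polynomial K) ^ 14 + 1937952 * (C θ : Polynomial K) ^ 15) * X ^ 2 + (28986731519424 + 10096783685808 * (C θ : Polynomial K) + 3516159230664 * (C θ : Polynomial K) ^ 2 + 1224952737048 * (C θ : Polynomial K) ^ 3 + 426665934336 * (C θ : Polynomial K) ^ 4 + 147834555768 * (C θ : Polynomial K) ^ 5 + 52728871032 * (C θ : Polynomial K) ^ 6 + 19519221072 * (C θ : Polynomial K) ^ 7 - 610145592 * (C θ : Polynomial K) ^ 8 + 10025733912 * (C θ : Polynomial K) ^ 9 + 5526270048 * (C θ : Polynomial K) ^ 10 - 22994504616 * (C θ : Polynomial K) ^ 11 + 22816302600 * (C θ : Polynomial K) ^ 12 + 3958097520 * (C θ : Polynomial K) ^ 13 - 25805453208 * (C θ : Polynomial K) ^ 14 + 15477024960 * (C θ : Polynomial K) ^ 15 + 8626499376 * (C θ : Polynomial K) ^ 16 - 13273524384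 * (C θ : Polynomial K) ^ 17 + 936228024 * (C θ : Polynomial K) ^ 18 + 5264465976 * (C θ : Polynomial K) ^ 19 - 1552736784 * (C θ : Polynomial K) ^ 20 - 1272530280 * (C θ : Polynomial K) ^ 21 + 501563928 * (C θ : Polynomial K) ^ 22 + 212854968 * (C θ : Polynomial K) ^ 23 - 74233944 * (C θ : Polynomial K) ^ 24 - 24305136 * (C θ : Polynomial K) ^ 25 + 4025376 * (C θ : Polynomial K) ^ 26 + 1243248 * (C θ : Polynomial K) ^ 27) * X ^ 3 + (71083510423992 + 24722308886868 * (C θ : Polynomial K) + 8629727093784 * (C θ : Polynomial K) ^ 2 + 2995444037844 * (C θ : Polynomial K) ^ 3 + 1048642055604 * (C θ : Polynomial K) ^ 4 + 363204253908 * (C θ : Polynomial K) ^ 5 + 126180004608 * (C θ : Polynomial K) ^ 6 + 42404011380 * (C θ : Polynomial K) ^ 7 + 27207371772 * (C θ : Polynomial K) ^ 8 - 13861660032 * (C θ : Polynomial K) ^ 9 - 5187613680 * (C θ : Polynomial K) ^ 10 + 76421590236 * (C θ : Polynomial K) ^ 11 - 105968522700 * (C θ : Polynomial K) ^ 12 -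 19721462904 * (C θ : Polynomial K) ^ 13 + 246440052396 * (C θ : Polynomial K) ^ 14 - 282438892656 * (C θ : Polynomial K) ^ 15 - 36111183048 * (C θ : Polynomial K) ^ 16 + 390214403316 * (C θ : Polynomial K) ^ 17 - 316499432184 * (C θ : Polynomial K) ^ 18 - 106282697940 * (C θ : Polynomial K) ^ 19 + 328298413932 * (C θ : Polynomial K) ^ 20 - 128364496524 * (C θ : Polynomial K) ^ 21 - 130730048280 * (C θ : Polynomial K) ^ 22 + 128876002992 * (C θ : Polynomial K) ^ 23 + 9099685908 * (C θ : Polynomial K) ^ 24 - 54941948136 * (C θ : Polynomial K) ^ 25 + 12473344548 * (C θ : Polynomial K) ^ 26 + 13514365296 * (C θ : Polynomial K) ^ 27 - 5766749964 * (C θ : Polynomial K) ^ 28 - 2031496632 * (C θ : Polynomial K) ^ 29 + 1268631396 * (C θ : Polynomial K) ^ 30 + 184172292 * (C θ : Polynomial K) ^ 31 - 159145344 * (C θ : Polynomial K) ^ 32 - 9352260 * (C θ : Polynomial K) ^ 33 + 10898496 * (C θ : Polynomial K) ^ 34 + 210168 * (C θ : Polynomial K) ^ 35 - 316008 * (C θ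 : Polynomial K) ^ 36) * X ^ 4 + (91949935512888 + 32831723588040 * (C θ : Polynomial K) + 11004331569624 * (C θ : Polynomial K) ^ 2 + 4062833664624 * (C θ : Polynomial K) ^ 3 + 1292350788000 * (C θ : Polynomial K) ^ 4 + 516263663232 * (C θ : Polynomial K) ^ 5 + 139406172984 * (C θ : Polynomial K) ^ 6 + 83054805408 * (C θ : Polynomial K) ^ 7 + 7768269360 * (C θ : Polynomial K) ^ 8 - 62200792944 * (C θ : Polynomial K) ^ 9 + 231115440888 * (C θ : Polynomial K) ^ 10 - 216231622200 * (C θ : Polynomial K) ^ 11 - 487407071736 * (C θ : Polynomial K) ^ 12 + 1882512103608 * (C θ : Polynomial K) ^ 13 - 2193745647600 * (C θ : Polynomial K) ^ 14 - 1371854462688 * (C θ : Polynomial K) ^ 15 + 8174271599568 * (C θ : Polynomial K) ^ 16 - 10613954344752 * (C θ : Polynomial K) ^ 17 + 269305223040 * (C θ : Polynomial K) ^ 18 + 18323897286312 * (C θ : Polynomial K) ^ 19 - 25488953001720 * (C θ : Polynomial K) ^ 20 + 7795332283608 * (C θ : Polynomial K) ^ 21 + 20116050501528 * (C θ : Polynomial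 K) ^ 22 - 28091662985016 * (C θ : Polynomial K) ^ 23 + 7848014319432 * (C θ : Polynomial K) ^ 24 + 15770718234072 * (C θ : Polynomial K) ^ 25 - 17451657273168 * (C θ : Polynomial K) ^ 26 + 1811408550120 * (C θ : Polynomial K) ^ 27 + 8954449788744 * (C θ : Polynomial K) ^ 28 - 5965838752680 * (C θ : Polynomial K) ^ 29 - 1180827666216 * (C θ : Polynomial K) ^ 30 + 3070187588232 * (C θ : Polynomial K) ^ 31 - 818378076888 * (C θ : Polynomial K) ^ 32 - 749456463816 * (C θ : Polynomial K) ^ 33 + 501793951536 * (C θ : Polynomial K) ^ 34 + 56483053488 * (C θ : Polynomial K) ^ 35 - 137857549536 * (C θ : Polynomial K) ^ 36 + 20309503248 * (C θ : Polynomial K) ^ 37 + 22069173168 * (C θ : Polynomial K) ^ 38 - 7461421272 * (C θ : Polynomial K) ^ 39 - 1979967240 * (C θ : Polynomial K) ^ 40 + 1207858392 * (C θ : Polynomial K) ^ 41 + 56941704 * (C θ : Polynomial K) ^ 42 - 111972456 * (C θ : Polynomial K) ^ 43 + 6716520 * (C θ : Polynomial K) ^ 44 + 5776920 * (C θ : Polynomial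 K) ^ 45 - 724464 * (C θ : Polynomial K) ^ 46 - 129600 * (C θ : Polynomial K) ^ 47 + 22032 * (C θ : Polynomial K) ^ 48) * X ^ 5 + (59493461893632 + 12851947185840 * (C θ : Polynomial K) + 8681882407344 * (C θ : Polynomial K) ^ 2 + 776218616928 * (C θ : Polynomial K) ^ 3 + 1471565488608 * (C θ : Polynomial K) ^ 4 - 129432328704 * (C θ : Polynomial K) ^ 5 + 298010828592 * (C θ : Polynomial K) ^ 6 - 79564829040 * (C θ : Polynomial K) ^ 7 + 70283260656 * (C θ : Polynomial K) ^ 8 - 27894046464 * (C θ : Polynomial K) ^ 9 + 18266710464 * (C θ : Polynomial K) ^ 10 - 8549600544 * (C θ : Polynomial K) ^ 11 + 4915952208 * (C θ : Polynomial K) ^ 12 - 2579562288 * (C θ : Polynomial K) ^ 13 + 2050356240 * (C θ : Polynomial K) ^ 14 - 2139587136 * (C θ : Polynomial K) ^ 15 + 822712464 * (C θ : Polynomial K) ^ 16 + 4395984048 * (C θ : Polynomial K) ^ 17 - 10970147520 * (C θ : Polynomial K) ^ 18 + 7701299856 * (C θ : Polynomial K) ^ 19 + 15260668272 * (C θ :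 Polynomial K) ^ 20 - 44790960096 * (C θ : Polynomial K) ^ 21 + 42533469360 * (C θ : Polynomial K) ^ 22 + 13901511600 * (C θ : Polynomial K) ^ 23 - 85577229648 * (C θ : Polynomial K) ^ 24 + 97237558080 * (C θ : Polynomial K) ^ 25 - 26103964608 * (C θ : Polynomial K) ^ 26 - 59187402432 * (C θ : Polynomial K) ^ 27 + 75899001024 * (C θ : Polynomial K) ^ 28 - 23853582432 * (C θ : Polynomial K) ^ 29 - 27298049760 * (C θ : Polynomial K) ^ 30 + 31185619488 * (C θ : Polynomial K) ^ 31 - 6318022032 * (C θ : Polynomial K) ^ 32 - 9444645360 * (C θ : Polynomial K) ^ 33 + 6979565232 * (C θ : Polynomial K) ^ 34 - 32941728 * (C θ : Polynomial K) ^ 35 - 1974198096 * (C θ : Polynomial K) ^ 36 + 705852144 * (C θ : Polynomial K) ^ 37 + 206429472 * (C θ : Polynomial K) ^ 38 - 189922320 * (C θ : Polynomial K) ^ 39 + 13845168 * (C θ : Polynomial K) ^ 40 + 22680000 * (C θ : Polynomial K) ^ 41 - 5913648 * (C θ : Polynomial K) ^ 42 - 1074384 * (C θ : Polynomial K) ^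 43 + 587088 * (C θ : Polynomial K) ^ 44 - 18144 * (C θ : Polynomial K) ^ 45 - 20736 * (C θ : Polynomial K) ^ 46 + 2592 * (C θ : Polynomial K) ^ 47) * X ^ 6) * hr
  refine ⟨C ((2957034338076004992 - 7652673376223670720 * θ + 7163124697011070656 * θ ^ 2 + 779885476344366336 * θ ^ 3) : K) * X ^ 8 + C ((3437039649781616688 - 7199891642625640992 * θ + 3772843937335749600 * θ ^ 2 + 5459528021592677040 * θ ^ 3) : K) * X ^ 7 + C ((3930821794934751816 - 8471424498831079632 * θ + 4951916525289450672 * θ ^ 2 + 5606823731723924616 * θ ^ 3) : K) * X ^ 6 + C ((2394055517252402232 - 5150755056773925864 * θ + 2992470030840630600 * θ ^ 2 + 3438299840261479416 * θ ^ 3) : K) * X ^ 5 + C ((915368430576044076 - 1969617814407038184 * θ + 1144773741250098360 * θ ^ 2 + 1314034620496777020 * θ ^ 3) : K) * X ^ 4 + C ((223933947728380872 - 481839703235747700 * θ + 280045121616943524 * θ ^ 2 + 321472960896593208 * θ ^ 3) : K) * X ^ 3 + C ((34240774729648500 - 73676072391491268 * θ + 42820600544630604 * θ ^ 2 + 49154936742610164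 * θ ^ 3) : K) * X ^ 2 + C ((2991846324306150 - 6437572737004596 * θ + 3741522631721556 * θ ^ 2 + 4294997434307910 * θ ^ 3) : K) * X + C ((114373060444113 - 246097161650124 * θ + 143031876245376 * θ ^ 2 + 164190248000781 * θ ^ 3) : K), ?_, ?_⟩
  · compute_degree!
  · rw [hQ', hA', hB', hX']
    simp only [map_ofNat, map_mul, map_add, map_sub, map_neg, map_pow, map_one]
    linear_combination ((-60479789715300104874797220222 + 297626698389369389467564372749 * (C θ : Polynomial K) - 329087704091308248214509825811 * (C θ : Polynomial K) ^ 2 - 107465583818819703417682374281 * (C θ : Polynomial K) ^ 3 + 374182551343345417942096307473 * (C θ : Polynomial K) ^ 4 + 153519818949332558807040745775 * (C θ : Polynomial K) ^ 5) + (-3245678406871837176557649154508 + 15937852589275380959410512212326 * (C θ : Polynomial K) - 17907021066139739383133653078716 * (C θ : Polynomial K) ^ 2 - 5120731024547025779289930304740 * (C θ : Polynomial K) ^ 3 + 19630509402375111568041486673422 * (C θ : Polynomial K) ^ 4 + 7778682752096362889930593504530 * (C θ : Polynomial K) ^ 5) * X + (-64725668884547371693583766557793 + 318259821340701437135238174522051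 * (C θ : Polynomial K) - 292233574694550502910453338156266 * (C θ : Polynomial K) ^ 2 - 243137383802589758172917731842201 * (C θ : Polynomial K) ^ 3 + 474354206198419232454245075273907 * (C θ : Polynomial K) ^ 4 + 249563010120561192334783147647486 * (C θ : Polynomial K) ^ 5) * X ^ 2 + (-370234638467164835513356611103252 + 1859428421614195304323485198110612 * (C θ : Polynomial K) + 1576850968718352733650500877401344 * (C θ : Polynomial K) ^ 2 - 8512124000919628583429699495399548 * (C θ : Polynomial K) ^ 3 + 6936531299751742087803704622012548 * (C θ : Polynomial K) ^ 4 + 6211231280401247060793694464530152 * (C θ : Polynomial K) ^ 5) * X ^ 3 + (7935238430577083919858226285537368 - 37772505218107683952561745202570804 * (C θ : Polynomial K) + 132492763733546038782181528723372596 * (C θ : Polynomial K) ^ 2 - 182396495762010435646611999471700332 * (C θ : Polynomial K) ^ 3 + 67871954930650720699577068966577724 * (C θ : Polynomial K) ^ 4 + 112021223862986478494167902516399888 * (C θ : Polynomial K) ^ 5) * X ^ 4 + (221824278729430400046993306746683176 - 1069220899058812787218426715929273416 * (C θ : Polynomial K) + 2593415235221219579694224761946799360 * (C θ : Polynomial K)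 ^ 2 - 2664667862472923174635333261992461232 * (C θ : Polynomial K) ^ 3 + 453816921950447381947485510246852624 * (C θ : Polynomial K) ^ 4 + 1496392282992351216750784102419600816 * (C θ : Polynomial K) ^ 5) * X ^ 5 + (3006611443857378457656477345929702760 - 14527991983978821006771628711738334328 * (C θ : Polynomial K) + 31862200954028464862985235910724341136 * (C θ : Polynomial K) ^ 2 - 28919204268173878401811713882072699288 * (C θ : Polynomial K) ^ 3 + 1890425778967215704076499974553970040 * (C θ : Polynomial K) ^ 4 + 15450085688595785860781475749856570624 * (C θ : Polynomial K) ^ 5) * X ^ 6 + (25736613790609220120932982608203813504 - 124460108920806930489347329421407427280 * (C θ : Polynomial K) + 262560869562487169741536811170205688960 * (C θ : Polynomial K) ^ 2 - 225305109037156181695518925104904019088 * (C θ : Polynomial K) ^ 3 + 3036405573939049386347699358865695072 * (C θ : Polynomial K) ^ 4 + 117329730266921150438798497136010323712 * (C θ : Polynomial K) ^ 5) * X ^ 7 + (126200163417850605505653351318354175872 - 610496220624886703980189218883624969968 * (C θ : Polynomial K) + 1272697360553676154425665191455508300224 * (C θ : Polynomial K) ^ 2 - 1072310140432223250160558933648141664544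 * (C θ : Polynomial K) ^ 3 - 4423978588773536891982731371336197696 * (C θ : Polynomial K) ^ 4 + 553486725452663238189392475443529980112 * (C θ : Polynomial K) ^ 5) * X ^ 8 + (134671399798335719949600555718258039584 - 651924760405632465878019054490918676544 * (C θ : Polynomial K) + 1445588291174508597485739151671124191552 * (C θ : Polynomial K) ^ 2 - 1331056689459738121587499105920499685664 * (C θ : Polynomial K) ^ 3 + 103056324259695160249919722997819212128 * (C θ : Polynomial K) ^ 4 + 714556188732767449567499270330021397792 * (C θ : Polynomial K) ^ 5) * X ^ 9 + (-2476871109339730335136575180603432700560 + 11980837347726955753658061762299323124400 * (C θ : Polynomial K) - 23749522348641847890691223514659904113760 * (C θ : Polynomial K) ^ 2 + 18406186052422439448934330319478644552496 * (C θ : Polynomial K) ^ 3 + 1615476402543013269622929187042218481008 * (C θ : Polynomial K) ^ 4 - 9097935687179082433737943175507308907616 * (C θ : Polynomial K) ^ 5) * X ^ 10 + (-16943757641206468604142533719266382921152 + 81967213416479766839326293502163575050432 * (C θ : Polynomial K) - 164064751723468426300643038775773767993216 * (C θ : Polynomial K) ^ 2 + 129323579128515464540746102820337094090560 * (C θ :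 Polynomial K) ^ 3 + 9089149022927182105180971130568875228992 * (C θ : Polynomial K) ^ 4 - 64507293627702835768958957144455076083200 * (C θ : Polynomial K) ^ 5) * X ^ 11 + (-45034735378610051617580362220146302898368 + 217803885003157920354417888078538009287168 * (C θ : Polynomial K) - 436456501388796704851257022110819815968896 * (C θ : Polynomial K) ^ 2 + 344477695450088323905146980903725346746432 * (C θ : Polynomial K) ^ 3 + 24189246825834165480988809310402406247744 * (C θ : Polynomial K) ^ 4 - 172938175868372342221551822818215731253056 * (C θ : Polynomial K) ^ 5) * X ^ 12 + (4511712691262668882663073531077336174464 - 22142751423590215204507833450417294529536 * (C θ : Polynomial K) + 46361031455649724328274143752708440668928 * (C θ : Polynomial K) ^ 2 - 40489530508863330038344268549470967628672 * (C θ : Polynomial K) ^ 3 + 3296197835802257993907773074340535923328 * (C θ : Polynomial K) ^ 4 + 16358253663614880629956114206669824272512 * (C θ : Polynomial K) ^ 5) * X ^ 13 + (411316803148485944171260129146897202453440 - 1991041851383708659378203486502747237637952 * (C θ : Polynomial K) + 4003448802441241272780946920127414342208640 * (C θ : Polynomial K) ^ 2 - 3184607726001018292952514955456633944181824 * (C θ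 : Polynomial K) ^ 3 - 186752370240900353777226553158512795482176 * (C θ : Polynomial K) ^ 4 + 1578632328315552108656096346458617597319040 * (C θ : Polynomial K) ^ 5) * X ^ 14 + (1348509605670549803059173398442355088852736 - 6513979058903064729620852021698208613616896 * (C θ : Polynomial K) + 13049974943497595493907395916672381716831744 * (C θ : Polynomial K) ^ 2 - 10264375740159117644549472059317876623727872 * (C θ : Polynomial K) ^ 3 - 812397257483248501565496931279370807546112 * (C θ : Polynomial K) ^ 4 + 5271915772121604135523544721832583345339904 * (C θ : Polynomial K) ^ 5) * X ^ 15 + (2190226090960449175488914749006119996479232 - 10541871809853958201282605477435126128617728 * (C θ : Polynomial K) + 20990808498747094627935726699439467624832512 * (C θ : Polynomial K) ^ 2 - 16191583083181798951331077575137152510457088 * (C θ : Polynomial K) ^ 3 - 1868798559499097325947138734924919141995776 * (C θ : Polynomial K) ^ 4 + 8836255441074095142130684542626238772661760 * (C θ : Polynomial K) ^ 5) * X ^ 16 + (2070026180757243482538618461975904230952960 - 10093014832584226804385078594941323130275840 * (C θ : Polynomial K) + 20535368854044983557792191358103857943248896 * (C θ : Polynomial K) ^ 2 - 16934972280605573952768755036536935046471680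 * (C θ : Polynomial K) ^ 3 + 104757369302941133805074721770434200010752 * (C θ : Polynomial K) ^ 4 + 7415621632589256733294791050981805370423296 * (C θ : Polynomial K) ^ 5) * X ^ 17 + (1192395425807977689359169867342457632964608 - 6167341009895661197799307209020277759836160 * (C θ : Polynomial K) + 13727917535095282261872396846150016323416064 * (C θ : Polynomial K) ^ 2 - 14204416595062163717556499044434023641378816 * (C θ : Polynomial K) ^ 3 + 5161213178843695791254642538882760667295744 * (C θ : Polynomial K) ^ 4 + 1721169535574003315225746302873821736013824 * (C θ : Polynomial K) ^ 5) * X ^ 18) * hr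
end

section
/- In the polynomial ring 𝔽₁₉[t] (polynomials over the field with 19 elements), with X(t) = t^8 + t^7 + 6t^6 + 16t^5 + 8t^3 + 4t^2 + 12, Q(t) = t^2 + 3t + 13, A(t) = 16t + 15, B(t) = 17t^2 + 6t + 14, there exists Y(t) ∈ 𝔽₁₉[t] such that X(t)^3 + A(t)·X(t) + B(t) = Q(t)·Y(t)^2. -/
open Polynomial

/-- In `𝔽₁₉[t]`, with `X(t) = t⁸ + t⁷ + 6t⁶ + 16t⁵ + 8t³ + 4t² + 12`,
`Q(t) = t² + 3t + 13`, `A(t) = 16t + 15`, `B(t) = 17t² + 6t + 14`, there exists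
`Y(t) ∈ 𝔽₁₉[t]` with `X³ + A·X + B = Q·Y²`. -/
theorem elkies_third_case_mod_19
    (Xp Qp Ap Bp : Polynomial (ZMod 19))
    (hX : Xp = X ^ 8 + X ^ 7 + 6 * X ^ 6 + 16 * X ^ 5 + 8 * X ^ 3
        + 4 * X ^ 2 + 12)
    (hQ : Qp = X ^ 2 + 3 * X + 13)
    (hA : Ap = 16 * X + 15)
    (hB : Bp = 17 * X ^ 2 + 6 * X + 14) :
    ∃ Yp : Polynomial (ZMod 19), Xp ^ 3 + Ap * Xp + Bp = Qp * Yp ^ 2 := by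
  subst hX hQ hA hB
  use X ^ 11 + 4 * X ^ 9 + 2 * X ^ 8 + 7 * X ^ 7 + 14 * X ^ 6 + 6 * X ^ 5
      + 2 * X ^ 4 + 11 * X ^ 3 + 14 * X ^ 2 + 16
  ring_nf
  reduce_mod_char
end
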